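/- Let Ω ⊆ ℝⁿ be a nonempty open set, let V: Ω → ℝ be measurable with V(x) > 0 for almost every x ∈ Ω and with 1/V locally integrable on Ω, let λ ∈ ℝ, and let u ∈ C_c^∞(Ω; ℂ). Then all the integrals below are finite and ∫_Ω conj(−Δu + Vu − λu) · (1/V) · (−Δu − λu) dx = ∫_Ω (1/V) |−Δu − λu|² dx + ∫_Ω |∇u|² dx − λ ∫_Ω |u|² dx. In particular, the left-hand side is real. -/

import Mathlib

open MeasureTheory

/-- Partial derivative in the `i`-th coordinate direction. -/
noncomputable def pd {n : ℕ} (i : Fin n) (f : EuclideanSpace ℝ (Fin n) → ℂ) :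
    EuclideanSpace ℝ (Fin n) → ℂ :=
  fun x => fderiv ℝ f x (EuclideanSpace.single i 1)

/-- The Laplacian `Δf = Σᵢ ∂²f/∂xᵢ²`. -/
noncomputable def lap {n : ℕ} (f : EuclideanSpace ℝ (Fin n) → ℂ) :
    EuclideanSpace ℝ (Fin n) → ℂ :=
  fun x => ∑ i, pd i (pd i f) x

variable {n : ℕ} {f : EuclideanSpace ℝ (Fin n) → ℂ}

lemma pd_contDiff (hf : ContDiff ℝ (⊤ : ℕ∞) f) (i : Fin n) : ContDiff ℝ (⊤ : ℕ∞) (pd i f) :=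
  (hf.fderiv_right (by simp)).clm_apply contDiff_const

lemma pd_hcs (hcs : HasCompactSupport f) (i : Fin n) : HasCompactSupport (pd i f) :=
  (hcs.fderiv ℝ).comp_left (g := fun L : EuclideanSpace ℝ (Fin n) →L[ℝ] ℂ =>
    L (EuclideanSpace.single i 1)) rfl

lemma tsupport_pd_subset (i : Fin n) : tsupport (pd i f) ⊆ tsupport f := by
  apply closure_minimal _ (isClosed_tsupport f)
  intro x hx
  have : fderiv ℝ f x ≠ 0 := fun h => hx (by simp [pd, h])
  exact support_fderiv_subset ℝ (by simpa [Function.mem_support] using this)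

lemma pd_conj (hf : ContDiff ℝ (⊤ : ℕ∞) f) (i : Fin n) (x : EuclideanSpace ℝ (Fin n)) :
    pd i (fun y => (starRingEnd ℂ) (f y)) x = (starRingEnd ℂ) (pd i f x) := by
  have h1 : HasFDerivAt f (fderiv ℝ f x) x := (hf.differentiable (by simp) x).hasFDerivAt
  have h2 : HasFDerivAt (fun y => (starRingEnd ℂ) (f y))
      ((Complex.conjCLE.toContinuousLinearMap).comp (fderiv ℝ f x)) x :=
    (Complex.conjCLE.toContinuousLinearMap.hasFDerivAt).comp x h1
  simp [pd, h2.fderiv]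

lemma integral_ofReal' {α : Type*} [MeasurableSpace α] {μ : Measure α} (f : α → ℝ) :
    ∫ x, ((f x : ℝ) : ℂ) ∂μ = ((∫ x, f x ∂μ : ℝ) : ℂ) :=
  integral_ofReal

lemma ibp (u : EuclideanSpace ℝ (Fin n) → ℂ) (hu : ContDiff ℝ (⊤ : ℕ∞) u)
    (hcs : HasCompactSupport u) (i : Fin n) :
    ∫ x, (starRingEnd ℂ) (u x) * pd i (pd i u) x
      = - ∫ x, (starRingEnd ℂ) (pd i u x) * pd i u x := by
  have hconj : ContDiff ℝ (⊤ : ℕ∞) (fun y => (starRingEnd ℂ) (u y)) :=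
    Complex.conjCLE.toContinuousLinearMap.contDiff.comp hu
  have hpd : ContDiff ℝ (⊤ : ℕ∞) (pd i u) := pd_contDiff hu i
  have key := integral_mul_fderiv_eq_neg_fderiv_mul_of_integrable
    (μ := (volume : Measure (EuclideanSpace ℝ (Fin n))))
    (f := fun y => (starRingEnd ℂ) (u y)) (g := pd i u) (v := EuclideanSpace.single i 1)
    ?_ ?_ ?_ (fun x _ => hconj.differentiable (by simp) x) (fun x _ => hpd.differentiable (by simp) x)
  · rw [show (fun x => (starRingEnd ℂ) (pd i u x) * pd i u x)
        = fun x => fderiv ℝ (fun y => (starRingEnd ℂ) (u y)) x (EuclideanSpace.single i 1)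
            * pd i u x from funext fun x => by rw [← pd_conj hu i x]; rfl]
    exact key
  · apply Continuous.integrable_of_hasCompactSupport
    · exact ((pd_contDiff hconj i).continuous).mul hpd.continuous
    · exact ((pd_hcs (hcs.comp_left (by simp)) i).mul_right)
  · apply Continuous.integrable_of_hasCompactSupport
    · exact hconj.continuous.mul (pd_contDiff hpd i).continuous
    · exact (hcs.comp_left (by simp)).mul_right
  · apply Continuous.integrable_of_hasCompactSupport
    · exact hconj.continuous.mul hpd.continuous
    · exact (hcs.comp_left (by simp)).mul_right

set_option maxHeartbeats 1000000 in
/-- For `u ∈ C_c^∞(Ω; ℂ)` and real `λ`, all the integrals are finite and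
`∫_Ω conj(−Δu + Vu − λu) (1/V)(−Δu − λu) = ∫_Ω (1/V)|−Δu − λu|² + ∫_Ω |∇u|² − λ ∫_Ω |u|²`;
in particular, the left-hand side is real. -/
theorem stmt7 (n : ℕ) (Ω : Set (EuclideanSpace ℝ (Fin n))) (hΩ : IsOpen Ω)
    (hne : Ω.Nonempty) (V : EuclideanSpace ℝ (Fin n) → ℝ) (hVm : Measurable V)
    (hVpos : ∀ᵐ x ∂(volume.restrict Ω), 0 < V x)
    (hVinv : LocallyIntegrableOn (fun x => (V x)⁻¹) Ω volume)
    (lam : ℝ) (u : EuclideanSpace ℝ (Fin n) → ℂ)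
    (hu : ContDiff ℝ (⊤ : ℕ∞) u) (hcs : HasCompactSupport u) (hsupp : tsupport u ⊆ Ω) :
    IntegrableOn (fun x =>
        (starRingEnd ℂ) (-lap u x + (V x : ℂ) * u x - (lam : ℂ) * u x)
          * (((V x)⁻¹ : ℝ) : ℂ) * (-lap u x - (lam : ℂ) * u x)) Ω volume ∧
    IntegrableOn (fun x => (V x)⁻¹ * ‖-lap u x - (lam : ℂ) * u x‖ ^ 2) Ω volume ∧
    IntegrableOn (fun x => ∑ i, ‖pd i u x‖ ^ 2) Ω volume ∧
    IntegrableOn (fun x => ‖u x‖ ^ 2) Ω volume ∧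
    (∫ x in Ω, (starRingEnd ℂ) (-lap u x + (V x : ℂ) * u x - (lam : ℂ) * u x)
        * (((V x)⁻¹ : ℝ) : ℂ) * (-lap u x - (lam : ℂ) * u x))
      = (((∫ x in Ω, (V x)⁻¹ * ‖-lap u x - (lam : ℂ) * u x‖ ^ 2)
          + (∫ x in Ω, ∑ i, ‖pd i u x‖ ^ 2)
          - lam * ∫ x in Ω, ‖u x‖ ^ 2 : ℝ) : ℂ) := by
  classical
  set K := tsupport u with hK
  have hKc : IsCompact K := hcs
  -- the function w
  set w : EuclideanSpace ℝ (Fin n) → ℂ := fun x => -lap u x - (lam : ℂ) * u x with hwdef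
  have hlapc : Continuous (lap u) := by
    apply continuous_finset_sum
    intro i _
    exact (pd_contDiff (pd_contDiff hu i) i).continuous
  have hwc : Continuous w := (hlapc.neg).sub (continuous_const.mul hu.continuous)
  have hw0 : ∀ x, x ∉ K → w x = 0 := by
    intro x hx
    have hu0 : u x = 0 := image_eq_zero_of_notMem_tsupport hx
    have hl0 : lap u x = 0 := by
      apply Finset.sum_eq_zero
      intro i _
      exact image_eq_zero_of_notMem_tsupport fun h =>
        hx (tsupport_pd_subset i (tsupport_pd_subset i h))
    simp [hwdef, hu0, hl0]
  have hwcs : HasCompactSupport w :=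
    HasCompactSupport.intro hKc hw0
  have hucs2 : HasCompactSupport (fun x => ‖u x‖ ^ 2 : _ → ℝ) := hcs.comp_left (g := fun z : ℂ => ‖z‖ ^ 2) (by simp)
  -- Integrability 4
  have hI4 : Integrable (fun x => ‖u x‖ ^ 2) volume :=
    (hu.continuous.norm.pow 2).integrable_of_hasCompactSupport hucs2
  -- Integrability 3
  have hIpd : ∀ i : Fin n, Integrable (fun x => ‖pd i u x‖ ^ 2) volume := fun i =>
    ((pd_contDiff hu i).continuous.norm.pow 2).integrable_of_hasCompactSupport
      (((pd_hcs hcs i).comp_left (g := fun z : ℂ => ‖z‖ ^ 2) (by simp) :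
        HasCompactSupport (fun x => ‖pd i u x‖ ^ 2 : _ → ℝ)))
  have hI3 : Integrable (fun x => ∑ i, ‖pd i u x‖ ^ 2) volume :=
    integrable_finset_sum _ fun i _ => hIpd i
  -- Integrability 2
  have hVinvK : IntegrableOn (fun x => (V x)⁻¹) K volume :=
    hVinv.integrableOn_compact_subset hsupp hKc
  obtain ⟨C, hC⟩ : ∃ C, ∀ x ∈ K, ‖(‖w x‖ ^ 2 : ℝ)‖ ≤ C :=
    hKc.exists_bound_of_continuousOn ((hwc.norm.pow 2).continuousOn)
  have hI2K : IntegrableOn (fun x => (V x)⁻¹ * ‖w x‖ ^ 2) K volume := by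
    apply Integrable.mono' (g := fun x => |(V x)⁻¹| * C) ((hVinvK.abs).mul_const C)
    · exact (hVm.inv.aemeasurable.aestronglyMeasurable.mul
        ((hwc.norm.pow 2).aestronglyMeasurable)).restrict
    · filter_upwards [ae_restrict_mem hKc.isClosed.measurableSet] with x hx
      calc ‖(V x)⁻¹ * ‖w x‖ ^ 2‖ = |(V x)⁻¹| * ‖(‖w x‖ ^ 2 : ℝ)‖ := by
            rw [norm_mul, Real.norm_eq_abs]
        _ ≤ |(V x)⁻¹| * C := mul_le_mul_of_nonneg_left (hC x hx) (abs_nonneg _)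
  have hΩmK : MeasurableSet (Ω \ K) := hΩ.measurableSet.diff hKc.isClosed.measurableSet
  have hI2 : IntegrableOn (fun x => (V x)⁻¹ * ‖w x‖ ^ 2) Ω volume := by
    have h0 : IntegrableOn (fun x => (V x)⁻¹ * ‖w x‖ ^ 2) (Ω \ K) volume := by
      apply (integrableOn_zero (s := Ω \ K)).congr_fun (fun x hx => ?_) hΩmK
      simp [hw0 x hx.2]
    exact (hI2K.union h0).mono_set fun x hx => by
      by_cases h : x ∈ K
      · exact Set.mem_union_left _ h
      · exact Set.mem_union_right _ ⟨hx, h⟩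
  -- conj u and products
  have hconjcs : HasCompactSupport (fun x => (starRingEnd ℂ) (u x)) :=
    hcs.comp_left (g := starRingEnd ℂ) (map_zero _)
  have hconjc : Continuous (fun x => (starRingEnd ℂ) (u x)) :=
    Complex.continuous_conj.comp hu.continuous
  have hRc : Integrable (fun x => (starRingEnd ℂ) (u x) * w x) volume :=
    (hconjc.mul hwc).integrable_of_hasCompactSupport hconjcs.mul_right
  -- a.e. pointwise identity on Ω
  have hae : ∀ᵐ x ∂(volume.restrict Ω),
      (starRingEnd ℂ) (-lap u x + (V x : ℂ) * u x - (lam : ℂ) * u x)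
          * (((V x)⁻¹ : ℝ) : ℂ) * w x
        = (((V x)⁻¹ * ‖w x‖ ^ 2 : ℝ) : ℂ) + (starRingEnd ℂ) (u x) * w x := by
    filter_upwards [hVpos] with x hx
    have hV0 : (V x : ℂ) ≠ 0 := by exact_mod_cast hx.ne'
    have h1 : (-lap u x + (V x : ℂ) * u x - (lam : ℂ) * u x) = w x + (V x : ℂ) * u x := by
      rw [hwdef]; ring
    have h2 : ((‖w x‖ ^ 2 : ℝ) : ℂ) = (starRingEnd ℂ) (w x) * w x := by
      rw [← Complex.normSq_eq_conj_mul_self]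
      norm_cast
      rw [Complex.sq_norm]
    rw [h1, map_add, map_mul, Complex.conj_ofReal, Complex.ofReal_mul, Complex.ofReal_inv, h2]
    field_simp
  -- Integrability 1
  have hsum : Integrable (fun x => (((V x)⁻¹ * ‖w x‖ ^ 2 : ℝ) : ℂ)
      + (starRingEnd ℂ) (u x) * w x) (volume.restrict Ω) := hI2.ofReal.add hRc.integrableOn
  have hI1 : IntegrableOn (fun x =>
      (starRingEnd ℂ) (-lap u x + (V x : ℂ) * u x - (lam : ℂ) * u x)
        * (((V x)⁻¹ : ℝ) : ℂ) * w x) Ω volume :=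
    hsum.congr (hae.mono fun x hx => hx.symm)
  refine ⟨hI1, hI2, hI3.integrableOn, hI4.integrableOn, ?_⟩
  -- set integrals equal global integrals for compactly supported integrands
  have hBset : ∫ x in Ω, ∑ i, ‖pd i u x‖ ^ 2 = ∫ x, ∑ i, ‖pd i u x‖ ^ 2 :=
    setIntegral_eq_integral_of_forall_compl_eq_zero fun x hx => by
      refine Finset.sum_eq_zero fun i _ => ?_
      have : pd i u x = 0 := image_eq_zero_of_notMem_tsupport
        fun h => hx (hsupp (tsupport_pd_subset i h))
      simp [this]
  have hCset : ∫ x in Ω, ‖u x‖ ^ 2 = ∫ x, ‖u x‖ ^ 2 :=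
    setIntegral_eq_integral_of_forall_compl_eq_zero fun x hx => by
      have : u x = 0 := image_eq_zero_of_notMem_tsupport fun h => hx (hsupp h)
      simp [this]
  have hGset : ∫ x in Ω, (starRingEnd ℂ) (u x) * w x = ∫ x, (starRingEnd ℂ) (u x) * w x :=
    setIntegral_eq_integral_of_forall_compl_eq_zero fun x hx => by
      have : u x = 0 := image_eq_zero_of_notMem_tsupport fun h => hx (hsupp h)
      simp [this]
  -- integrable products
  have hpdint : ∀ i : Fin n,
      Integrable (fun x => (starRingEnd ℂ) (u x) * pd i (pd i u) x) volume := fun i =>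
    (hconjc.mul (pd_contDiff (pd_contDiff hu i) i).continuous).integrable_of_hasCompactSupport
      hconjcs.mul_right
  have huu : Integrable (fun x => (starRingEnd ℂ) (u x) * u x) volume :=
    (hconjc.mul hu.continuous).integrable_of_hasCompactSupport hconjcs.mul_right
  have hcm : ∀ z : ℂ, (starRingEnd ℂ) z * z = ((‖z‖ ^ 2 : ℝ) : ℂ) := fun z => by
    rw [← Complex.normSq_eq_conj_mul_self]
    norm_cast
    rw [Complex.sq_norm]
  -- compute the global integral of conj u * w
  have hptS : ∀ x, (starRingEnd ℂ) (u x) * w x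
      = (∑ i, -((starRingEnd ℂ) (u x) * pd i (pd i u) x))
        - (lam : ℂ) * ((starRingEnd ℂ) (u x) * u x) := by
    intro x
    rw [hwdef]
    simp only [lap]
    rw [show (∑ i, -((starRingEnd ℂ) (u x) * pd i (pd i u) x))
        = -((starRingEnd ℂ) (u x) * ∑ i, pd i (pd i u) x) by
      rw [Finset.mul_sum, ← Finset.sum_neg_distrib]]
    ring
  have hG : ∫ x, (starRingEnd ℂ) (u x) * w x
      = ((∫ x, ∑ i, ‖pd i u x‖ ^ 2 : ℝ) : ℂ) - (((lam : ℝ) * ∫ x, ‖u x‖ ^ 2 : ℝ) : ℂ) := by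
    rw [show (fun x => (starRingEnd ℂ) (u x) * w x) = _ from funext hptS]
    have hn1 : Integrable (fun x => ∑ i, -((starRingEnd ℂ) (u x) * pd i (pd i u) x)) volume :=
      integrable_finset_sum _ fun i _ => (hpdint i).neg
    have hn2 : Integrable (fun x => (lam : ℂ) * ((starRingEnd ℂ) (u x) * u x)) volume :=
      huu.const_mul _
    rw [integral_sub hn1 hn2]
    have hn3 : ∀ i ∈ (Finset.univ : Finset (Fin n)),
        Integrable (fun x => -((starRingEnd ℂ) (u x) * pd i (pd i u) x)) volume :=
      fun i _ => (hpdint i).neg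
    rw [integral_finset_sum _ hn3, integral_const_mul]
    have hterm : ∀ i : Fin n, ∫ x, -((starRingEnd ℂ) (u x) * pd i (pd i u) x)
        = ((∫ x, ‖pd i u x‖ ^ 2 : ℝ) : ℂ) := by
      intro i
      rw [integral_neg, ibp u hu hcs i, neg_neg]
      rw [show (fun x => (starRingEnd ℂ) (pd i u x) * pd i u x)
          = fun x => ((‖pd i u x‖ ^ 2 : ℝ) : ℂ) from funext fun x => hcm _]
      exact integral_ofReal' _
    have huu2 : ∫ x, (starRingEnd ℂ) (u x) * u x = ((∫ x, ‖u x‖ ^ 2 : ℝ) : ℂ) := by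
      rw [show (fun x => (starRingEnd ℂ) (u x) * u x)
          = fun x => ((‖u x‖ ^ 2 : ℝ) : ℂ) from funext fun x => hcm _]
      exact integral_ofReal' _
    simp_rw [hterm, huu2]
    rw [integral_finset_sum _ fun i _ => hIpd i]
    push_cast
    ring
  -- final computation
  calc ∫ x in Ω, (starRingEnd ℂ) (-lap u x + (V x : ℂ) * u x - (lam : ℂ) * u x)
        * (((V x)⁻¹ : ℝ) : ℂ) * (-lap u x - (lam : ℂ) * u x)
      = ∫ x in Ω, ((((V x)⁻¹ * ‖w x‖ ^ 2 : ℝ) : ℂ) + (starRingEnd ℂ) (u x) * w x) :=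
        integral_congr_ae hae
    _ = (∫ x in Ω, (((V x)⁻¹ * ‖w x‖ ^ 2 : ℝ) : ℂ)) + ∫ x in Ω, (starRingEnd ℂ) (u x) * w x :=
        integral_add hI2.ofReal hRc.integrableOn
    _ = ((∫ x in Ω, (V x)⁻¹ * ‖w x‖ ^ 2 : ℝ) : ℂ)
        + (((∫ x in Ω, ∑ i, ‖pd i u x‖ ^ 2 : ℝ) : ℂ)
          - (((lam : ℝ) * ∫ x in Ω, ‖u x‖ ^ 2 : ℝ) : ℂ)) := by
        rw [integral_ofReal' _, hGset, hG, hBset, hCset]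
    _ = _ := by push_cast; ring
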